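/- arXiv:2507.15172 — 10 statements merged into one kernel-verified Lean document; each statement's English description precedes it below -/
import Mathlib

section
/- The KS map is surjective onto the purely imaginary quaternions: for every quaternion q with q.re = 0 there exists a quaternion z with star z * I * z = q. -/
/-- The imaginary unit `i` of the quaternions. -/
def qI : Quaternion ℝ := ⟨0, 1, 0, 0⟩

theorem KS_ext (z q : Quaternion ℝ) : star z * qI * z = q ↔
    ((z.re * 0 - -z.imI * 1 - -z.imJ * 0 - -z.imK * 0) * z.re -
          (z.re * 1 + -z.imI * 0 + -z.imJ * 0 - -z.imK * 0) * z.imI -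
        (z.re * 0 - -z.imI * 0 + -z.imJ * 0 + -z.imK * 1) * z.imJ -
      (z.re * 0 + -z.imI * 0 - -z.imJ * 1 + -z.imK * 0) * z.imK = q.re ∧
    (z.re * 0 - -z.imI * 1 - -z.imJ * 0 - -z.imK * 0) * z.imI +
          (z.re * 1 + -z.imI * 0 + -z.imJ * 0 - -z.imK * 0) * z.re +
        (z.re * 0 - -z.imI * 0 + -z.imJ * 0 + -z.imK * 1) * z.imK -
      (z.re * 0 + -z.imI * 0 - -z.imJ * 1 + -z.imK * 0) * z.imJ = q.imI ∧
    (z.re * 0 - -z.imI * 1 - -z.imJ * 0 - -z.imK * 0) * z.imJ -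
          (z.re * 1 + -z.imI * 0 + -z.imJ * 0 - -z.imK * 0) * z.imK +
        (z.re * 0 - -z.imI * 0 + -z.imJ * 0 + -z.imK * 1) * z.re +
      (z.re * 0 + -z.imI * 0 - -z.imJ * 1 + -z.imK * 0) * z.imI = q.imJ ∧
    (z.re * 0 - -z.imI * 1 - -z.imJ * 0 - -z.imK * 0) * z.imK +
          (z.re * 1 + -z.imI * 0 + -z.imJ * 0 - -z.imK * 0) * z.imJ -
        (z.re * 0 - -z.imI * 0 + -z.imJ * 0 + -z.imK * 1) * z.imI +
      (z.re * 0 + -z.imI * 0 - -z.imJ * 1 + -z.imK * 0) * z.re = q.imK) := by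
  rw [Quaternion.ext_iff]
  simp only [Quaternion.re_mul, Quaternion.imI_mul,
    Quaternion.imJ_mul, Quaternion.imK_mul, Quaternion.re_star,
    Quaternion.imI_star, Quaternion.imJ_star, Quaternion.imK_star]
  exact Iff.rfl

/-- The Kustaanheimo-Stiefel map `Φ(z) = z̄ i z` is surjective onto the purely
imaginary quaternions. -/
theorem KS_map_surjective (q : Quaternion ℝ) (hq : q.re = 0) :
    ∃ z : Quaternion ℝ, star z * qI * z = q := by
  obtain ⟨a, b, c, d⟩ := q
  simp only [Quaternion.ext_iff] at *
  subst hq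
  set r : ℝ := Real.sqrt (b^2 + c^2 + d^2) with hr
  have hr2 : r^2 = b^2 + c^2 + d^2 := Real.sq_sqrt (by positivity)
  have hrb : |b| ≤ r := by
    rw [hr]
    rw [abs_le]
    constructor
    · nlinarith [Real.sqrt_nonneg (b^2+c^2+d^2), hr2]
    · nlinarith [Real.sqrt_nonneg (b^2+c^2+d^2), hr2]
  by_cases h : r + b = 0
  · -- q = b i with b = -r ≤ 0, c = d = 0
    have hb : b = -r := by linarith
    have hb2 : b^2 = r^2 := by rw [hb]; ring
    have hc2 : c^2 = 0 := by nlinarith [sq_nonneg d]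
    have hd2 : d^2 = 0 := by nlinarith [sq_nonneg c]
    have hc : c = 0 := pow_eq_zero_iff two_ne_zero |>.mp hc2
    have hd : d = 0 := pow_eq_zero_iff two_ne_zero |>.mp hd2
    refine ⟨⟨0, 0, Real.sqrt r, 0⟩, ?_⟩
    have hs : Real.sqrt r ^ 2 = r := Real.sq_sqrt (Real.sqrt_nonneg _)
    refine (KS_ext _ _).mpr ?_
    dsimp only
    refine ⟨by ring, ?_, by simp [hc], by simp [hd]⟩
    · nlinarith [hs]
  · have hpos : 0 < r + b := by
      rcases lt_or_eq_of_le (neg_le_of_abs_le hrb) with h1 | h1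
      · linarith
      · exact absurd (by linarith) h
    set s : ℝ := (Real.sqrt (2 * (r + b)))⁻¹ with hsdef
    have hsq : s^2 * (2 * (r + b)) = 1 := by
      rw [hsdef, inv_pow, Real.sq_sqrt (by linarith)]
      exact inv_mul_cancel₀ (by linarith)
    refine ⟨⟨0, s * (r + b), s * c, s * d⟩, ?_⟩
    refine (KS_ext _ _).mpr ?_
    dsimp only
    refine ⟨by ring, ?_, ?_, ?_⟩
    · linear_combination s^2 * hr2 + b * hsq
    · linear_combination c * hsq
    · linear_combination d * hsq
end

section
/- The fibers of the KS map are exactly the S¹-orbits: if two quaternions a and b satisfy star a * I * a = star b * I * b, then there exists θ ∈ ℝ such that b = ((Real.cos θ : ℍ) + (Real.sin θ) • I) * a. Together with surjectivity, this says the induced map ℍ/S¹ → 𝕀ℍ, [z] ↦ Φ(z), is a bijection. -/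
lemma qI_ne_zero : qI ≠ 0 := by
  intro h
  have := congrArg QuaternionAlgebra.imI h
  exact one_ne_zero this

lemma normSq_qI : Quaternion.normSq qI = 1 := by
  rw [Quaternion.normSq_def']; simp [qI]

/-- The fibers of the Kustaanheimo-Stiefel map `Φ(z) = z̄ i z` are exactly the
`S¹`-orbits of the action `z ↦ e^{iθ} z`: two quaternions with the same KS image
differ by multiplication with `cos θ + sin θ • i`. -/
theorem KS_map_fibers_are_circle_orbits (a b : Quaternion ℝ)
    (h : star a * qI * a = star b * qI * b) :
    ∃ θ : ℝ, b = ((Real.cos θ : Quaternion ℝ) + (Real.sin θ) • qI) * a := by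
  by_cases ha : a = 0
  · subst ha
    simp at h
    refine ⟨0, ?_⟩
    rcases h with (hb | hq) | hb
    · simp [hb]
    · exact absurd hq qI_ne_zero
    · simp [hb]
  · -- norms are equal
    have hn : Quaternion.normSq a = Quaternion.normSq b := by
      have h2 := congrArg Quaternion.normSq h
      simp only [map_mul, Quaternion.normSq_star, normSq_qI] at h2
      have h2' : Quaternion.normSq a ^ 2 = Quaternion.normSq b ^ 2 := by ring_nf; ring_nf at h2; linarith
      nlinarith [(Quaternion.normSq_nonneg : 0 ≤ Quaternion.normSq a), (Quaternion.normSq_nonneg : 0 ≤ Quaternion.normSq b)]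
    set u : Quaternion ℝ := b * a⁻¹ with hu
    have hb : b = u * a := by rw [hu, mul_assoc, inv_mul_cancel₀ ha, mul_one]
    have hnu : Quaternion.normSq u = 1 := by
      have hna : Quaternion.normSq a ≠ 0 := fun h0 => ha (Quaternion.normSq_eq_zero.mp h0)
      rw [hu, map_mul, map_inv₀, ← hn]
      field_simp
    have husu : u * star u = 1 := by
      rw [Quaternion.self_mul_star, hnu]; simp
    have h1 : qI = star u * qI * u := by
      have h' : star a * qI * a = star a * (star u * qI * u) * a := by
        rw [h, hb, star_mul]; noncomm_ring
      have h'' := mul_right_cancel₀ ha h'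
      exact mul_left_cancel₀ (star_ne_zero.mpr ha) (by rw [← mul_assoc] at h'' ⊢; exact h'')
    have hcomm : u * qI = qI * u := by
      calc u * qI = u * (star u * qI * u) := by rw [← h1]
        _ = (u * star u) * qI * u := by noncomm_ring
        _ = qI * u := by rw [husu, one_mul]
    have hK : u.imK = 0 := by
      have := congrArg QuaternionAlgebra.imJ hcomm
      simp only [Quaternion.imJ_mul] at this
      simp [qI] at this
      linarith
    have hJ : u.imJ = 0 := by
      have := congrArg QuaternionAlgebra.imK hcomm
      simp only [Quaternion.imK_mul] at this
      simp [qI] at this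
      linarith
    have hre : u.re ^ 2 + u.imI ^ 2 = 1 := by
      rw [Quaternion.normSq_def'] at hnu
      rw [hJ, hK] at hnu
      nlinarith
    set z : ℂ := ⟨u.re, u.imI⟩ with hz
    have hzabs : ‖z‖ = 1 := by
      simp [Complex.norm_def, Complex.normSq_mk, hz]
      nlinarith [Real.sq_sqrt (show (0:ℝ) ≤ u.re * u.re + u.imI * u.imI by nlinarith),
        Real.sqrt_nonneg (u.re * u.re + u.imI * u.imI)]
    have hz0 : z ≠ 0 := by
      intro h0; rw [h0] at hzabs; simp at hzabs
    refine ⟨Complex.arg z, ?_⟩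
    have hc : Real.cos (Complex.arg z) = u.re := by
      rw [Complex.cos_arg hz0, hzabs]; simp [hz]
    have hs : Real.sin (Complex.arg z) = u.imI := by
      rw [Complex.sin_arg, hzabs]; simp [hz]
    rw [hb]
    congr 1
    ext <;> simp only [Quaternion.re_add, Quaternion.imI_add, Quaternion.imJ_add, Quaternion.imK_add, Quaternion.re_smul, Quaternion.imI_smul, Quaternion.imJ_smul, Quaternion.imK_smul] <;> simp [qI, hc, hs, hJ, hK]
end

section
/- The lifted KS map 𝔓(z,w) = (star z * I * z, (star z * I * w)/(2‖z‖²)) is invariant under the diagonal circle action: for every θ ∈ ℝ and all quaternions z, w, writing u = (Real.cos θ : ℍ) + (Real.sin θ) • I, one has star (u * z) * I * (u * w) = star z * I * w (and, by the invariance of Φ, consequently 𝔓(u·z, u·w) = 𝔓(z,w) whenever z ≠ 0). -/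
lemma key (θ : ℝ) : star ((Real.cos θ : Quaternion ℝ) + (Real.sin θ) • qI) * qI *
    ((Real.cos θ : Quaternion ℝ) + (Real.sin θ) • qI) = qI := by
  have h := Real.sin_sq_add_cos_sq θ
  have h1 : qI.re = 0 := rfl
  have h2 : qI.imI = 1 := rfl
  have h3 : qI.imJ = 0 := rfl
  have h4 : qI.imK = 0 := rfl
  ext <;> simp [h1, h2, h3, h4, Quaternion.ext_iff] <;> ring_nf <;> nlinarith [h]

lemma nrm (θ : ℝ) : ‖(Real.cos θ : Quaternion ℝ) + (Real.sin θ) • qI‖ = 1 := by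
  have h := Real.sin_sq_add_cos_sq θ
  have h2 : Quaternion.normSq ((Real.cos θ : Quaternion ℝ) + (Real.sin θ) • qI) = 1 := by
    have h1 : qI.re = 0 := rfl
    have h2 : qI.imI = 1 := rfl
    have h3 : qI.imJ = 0 := rfl
    have h4 : qI.imK = 0 := rfl
    simp [Quaternion.normSq_def', h1, h2, h3, h4]
  rw [Quaternion.normSq_eq_norm_mul_self] at h2
  nlinarith [norm_nonneg ((Real.cos θ : Quaternion ℝ) + (Real.sin θ) • qI)]

/-- The lifted Kustaanheimo-Stiefel map
`𝔓(z,w) = (z̄ i z, (z̄ i w)/(2|z|²))` is invariant under the diagonal circle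
action `(z,w) ↦ (e^{iθ}z, e^{iθ}w)`. -/
theorem lifted_KS_map_circle_invariant (θ : ℝ) (z w : Quaternion ℝ) :
    star (((Real.cos θ : Quaternion ℝ) + (Real.sin θ) • qI) * z) * qI *
        ((((Real.cos θ : Quaternion ℝ) + (Real.sin θ) • qI)) * w)
      = star z * qI * w ∧
    (z ≠ 0 →
      (star (((Real.cos θ : Quaternion ℝ) + (Real.sin θ) • qI) * z) * qI *
          ((((Real.cos θ : Quaternion ℝ) + (Real.sin θ) • qI)) * z),
        (star (((Real.cos θ : Quaternion ℝ) + (Real.sin θ) • qI) * z) * qI *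
            ((((Real.cos θ : Quaternion ℝ) + (Real.sin θ) • qI)) * w)) /
          ((2 * ‖(((Real.cos θ : Quaternion ℝ) + (Real.sin θ) • qI)) * z‖ ^ 2 : ℝ) :
            Quaternion ℝ))
        = (star z * qI * z,
            (star z * qI * w) / ((2 * ‖z‖ ^ 2 : ℝ) : Quaternion ℝ))) := by
  have inv : ∀ v : Quaternion ℝ,
      star (((Real.cos θ : Quaternion ℝ) + (Real.sin θ) • qI) * z) * qI *
        ((((Real.cos θ : Quaternion ℝ) + (Real.sin θ) • qI)) * v) = star z * qI * v := by
    intro v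
    rw [star_mul]
    calc star z * star ((Real.cos θ : Quaternion ℝ) + (Real.sin θ) • qI) * qI *
        (((Real.cos θ : Quaternion ℝ) + (Real.sin θ) • qI) * v)
        = star z * (star ((Real.cos θ : Quaternion ℝ) + (Real.sin θ) • qI) * qI *
          ((Real.cos θ : Quaternion ℝ) + (Real.sin θ) • qI)) * v := by noncomm_ring
      _ = star z * qI * v := by rw [key]
  refine ⟨inv w, fun _ => ?_⟩
  rw [inv z, inv w, norm_mul, nrm, one_mul]
end

section
/- Kinetic identity for the KS transformation: for all quaternions z and v satisfying the orthogonality condition (star v * (I * z)).re = 0 (i.e. ⟨v, I·z⟩ = 0), one has ‖star v * I * z + star z * I * v‖² = 4 ‖v‖² ‖z‖². -/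
/-- Kinetic identity for the Kustaanheimo-Stiefel transformation: if `v` is
orthogonal to `i·z`, then `‖dΦ(z)v‖² = 4‖v‖²‖z‖²` for the differential
`dΦ(z)v = v̄ i z + z̄ i v` of the KS map. -/
theorem KS_kinetic_identity (z v : Quaternion ℝ)
    (h : (star v * (qI * z)).re = 0) :
    ‖star v * qI * z + star z * qI * v‖ ^ 2 = 4 * ‖v‖ ^ 2 * ‖z‖ ^ 2 := by
  have e : ∀ a : Quaternion ℝ, ‖a‖ ^ 2 = Quaternion.normSq a := fun a => by
    rw [sq, ← Quaternion.normSq_eq_norm_mul_self]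
  simp only [e, Quaternion.normSq_def', Quaternion.re_mul,
    Quaternion.imI_mul, Quaternion.imJ_mul, Quaternion.imK_mul,
    Quaternion.re_add, Quaternion.imI_add, Quaternion.imJ_add, Quaternion.imK_add,
    Quaternion.re_star, Quaternion.imI_star, Quaternion.imJ_star, Quaternion.imK_star] at h ⊢
  simp only [qI] at h ⊢
  nlinarith [h, sq_nonneg (v.re*z.re), mul_self_nonneg (v.re*z.imI - v.imI*z.re + v.imJ*z.imK - v.imK*z.imJ)]
end

section
/- Adjoint formula for the differential of the KS map: for all quaternions z, u and every purely imaginary quaternion v (v.re = 0), one has ⟨dΦ(z)u, v⟩ = ⟨u, -2 • (I * z * v)⟩; explicitly, (star (star u * I * z + star z * I * u) * v).re = (star u * ((-2 : ℝ) • (I * z * v))).re. In other words, the transpose of dΦ(z) restricted to purely imaginary quaternions is v ↦ -2 I z v. -/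
/-- Adjoint formula for the differential of the KS map: for purely imaginary `v`,
`⟨dΦ(z)u, v⟩ = ⟨u, -2 • (i z v)⟩`, i.e. the transpose of `dΦ(z)` restricted to
purely imaginary quaternions is `v ↦ -2 i z v`. -/
theorem KS_map_differential_adjoint (z u v : Quaternion ℝ) (hv : v.re = 0) :
    (star (star u * qI * z + star z * qI * u) * v).re
      = (star u * ((-2 : ℝ) • (qI * z * v))).re := by
  have h1 : qI.re = 0 := rfl; have h2 : qI.imI = 1 := rfl
  have h3 : qI.imJ = 0 := rfl; have h4 : qI.imK = 0 := rfl
  simp [h1, h2, h3, h4, Quaternion.ext_iff, Quaternion.re_mul, Quaternion.imI_mul, Quaternion.imJ_mul,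
    Quaternion.imK_mul, hv]
  ring
end

section
/- Orthogonality linearizes the KS velocity: for all quaternions z and v, one has (star v * (I * z)).re = 0 if and only if star v * I * z = star z * I * v. Consequently, under this orthogonality condition, star v * I * z + star z * I * v = 2 * (star z * I * v). -/
/-- Orthogonality linearizes the KS velocity: `⟨v, i z⟩ = 0` if and only if
`v̄ i z = z̄ i v`, and in that case `v̄ i z + z̄ i v = 2 (z̄ i v)`. -/
theorem KS_orthogonality_linearizes (z v : Quaternion ℝ) :
    ((star v * (qI * z)).re = 0 ↔ star v * qI * z = star z * qI * v) ∧
    ((star v * (qI * z)).re = 0 →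
      star v * qI * z + star z * qI * v = 2 * (star z * qI * v)) := by
  have h1 : qI.re = 0 := rfl
  have h2 : qI.imI = 1 := rfl
  have h3 : qI.imJ = 0 := rfl
  have h4 : qI.imK = 0 := rfl
  simp only [two_mul, h1, h2, h3, h4, Quaternion.ext_iff, Quaternion.re_mul, Quaternion.imI_mul,
    Quaternion.imJ_mul, Quaternion.imK_mul, Quaternion.re_star, Quaternion.imI_star,
    Quaternion.imJ_star, Quaternion.imK_star, Quaternion.re_add, Quaternion.imI_add,
    Quaternion.imJ_add, Quaternion.imK_add]
  norm_num
  constructor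
  · constructor
    · intro h; refine ⟨by linarith, by ring, by ring, by ring⟩
    · intro ⟨h, _, _, _⟩; linarith
  · intro h; refine ⟨by linarith, by ring, by ring, by ring⟩
end

section
/- First variation of the Stark-Zeeman action functional: let A : ℝ³ → ℝ³ be smooth, let V : ℝ → ℝ³ → ℝ be such that (t,x) ↦ V t x is smooth on ℝ × (ℝ³ \ {0}), and let q, ξ : ℝ → ℝ³ be smooth 1-periodic curves with q(t) ≠ 0 for all t. Define B(x) : ℝ³ → ℝ³ by (B(x)w)ᵢ = Σⱼ (∂ᵢAⱼ(x) − ∂ⱼAᵢ(x)) wⱼ, and let 𝒜(γ) = ∫₀¹ ( (1/2)‖γ'(t)‖² + ⟨A(γ(t)), γ'(t)⟩ − V t (γ(t)) ) dt. Then s ↦ 𝒜(q + s•ξ) is differentiable at s = 0 with derivative deriv (fun s => 𝒜(q + s•ξ)) 0 = − ∫₀¹ ⟨q''(t) − B(q(t)) q'(t) + ∇ₓ(V t)(q(t)), ξ(t)⟩ dt. In particular, if q solves the Newtonian equation q'' = B(q)q' − ∇ₓ(V t)(q), then the first variation of 𝒜 at q vanishes in every direction ξ. -/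
open RealInnerProductSpace MeasureTheory Set Metric

noncomputable section

local notation "E3" => EuclideanSpace ℝ (Fin 3)

lemma euclid_expand (v : E3) : v = ∑ i, v i • EuclideanSpace.single i 1 := by
  ext j
  simp only [Fin.sum_univ_three, PiLp.add_apply, PiLp.smul_apply,
    EuclideanSpace.single_apply, smul_eq_mul]
  fin_cases j <;> simp [Fin.ext_iff]

lemma clm_expand (L : E3 →L[ℝ] E3) (v : E3) :
    L v = ∑ i, v i • L (EuclideanSpace.single i 1) := by
  conv_lhs => rw [euclid_expand v]
  simp [map_sum]

lemma inner_expand (x y : E3) : ⟪x, y⟫ = ∑ i, x i * y i := by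
  simp [PiLp.inner_apply, RCLike.inner_apply]
  exact Finset.sum_congr rfl fun _ _ => mul_comm _ _

lemma B_identity (A : E3 → E3) (B : E3 → E3 → E3)
    (hB : ∀ x w i, B x w i
      = ∑ j, (fderiv ℝ A x (EuclideanSpace.single i 1) j
          - fderiv ℝ A x (EuclideanSpace.single j 1) i) * w j)
    (x v w : E3) :
    ⟪fderiv ℝ A x v, w⟫ - ⟪B x w, v⟫ = ⟪fderiv ℝ A x w, v⟫ := by
  rw [inner_expand, inner_expand, inner_expand, clm_expand (fderiv ℝ A x) v,
    clm_expand (fderiv ℝ A x) w]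
  simp only [hB, Fin.sum_univ_three, PiLp.add_apply, PiLp.smul_apply, smul_eq_mul]
  ring

/-- First variation of the Stark-Zeeman action functional
`𝒜(γ) = ∫₀¹ (½‖γ'‖² + ⟨A(γ), γ'⟩ − V t (γ)) dt`: for smooth `1`-periodic curves
`q` (avoiding the origin) and `ξ`, the map `s ↦ 𝒜(q + s•ξ)` is differentiable at
`s = 0` with derivative `−∫₀¹ ⟨q'' − B(q)q' + ∇(V t)(q), ξ⟩ dt`, where
`B(x)ᵢⱼ = ∂ᵢAⱼ(x) − ∂ⱼAᵢ(x)`. In particular the first variation vanishes along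
solutions of the Newtonian equation `q'' = B(q)q' − ∇(V t)(q)`. -/
theorem stark_zeeman_first_variation
    (A : EuclideanSpace ℝ (Fin 3) → EuclideanSpace ℝ (Fin 3))
    (V : ℝ → EuclideanSpace ℝ (Fin 3) → ℝ)
    (hA : ContDiff ℝ (⊤ : ℕ∞) A)
    (hV : ContDiffOn ℝ (⊤ : ℕ∞) (fun p : ℝ × EuclideanSpace ℝ (Fin 3) => V p.1 p.2)
      ((Set.univ : Set ℝ) ×ˢ ({(0 : EuclideanSpace ℝ (Fin 3))}ᶜ)))
    (q ξ : ℝ → EuclideanSpace ℝ (Fin 3))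
    (hq : ContDiff ℝ (⊤ : ℕ∞) q) (hξ : ContDiff ℝ (⊤ : ℕ∞) ξ)
    (hqper : ∀ t, q (t + 1) = q t) (hξper : ∀ t, ξ (t + 1) = ξ t)
    (hq0 : ∀ t, q t ≠ 0)
    (B : EuclideanSpace ℝ (Fin 3) → EuclideanSpace ℝ (Fin 3) →
      EuclideanSpace ℝ (Fin 3))
    (hB : ∀ x w i, B x w i
      = ∑ j, (fderiv ℝ A x (EuclideanSpace.single i 1) j
          - fderiv ℝ A x (EuclideanSpace.single j 1) i) * w j)
    (𝒜 : (ℝ → EuclideanSpace ℝ (Fin 3)) → ℝ)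
    (h𝒜 : ∀ γ : ℝ → EuclideanSpace ℝ (Fin 3), 𝒜 γ
      = ∫ t in (0:ℝ)..1,
          ((1/2) * ‖deriv γ t‖ ^ 2 + ⟪A (γ t), deriv γ t⟫ - V t (γ t))) :
    HasDerivAt (fun s : ℝ => 𝒜 (fun t => q t + s • ξ t))
      (-∫ t in (0:ℝ)..1,
        ⟪deriv (deriv q) t - B (q t) (deriv q t) + gradient (V t) (q t),
          ξ t⟫) 0 ∧
    ((∀ t, deriv (deriv q) t = B (q t) (deriv q t) - gradient (V t) (q t)) →
      HasDerivAt (fun s : ℝ => 𝒜 (fun t => q t + s • ξ t)) 0 0) := by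
  classical
  -- basic differentiability facts
  have hqd : Differentiable ℝ q := hq.differentiable (by simp)
  have hξd : Differentiable ℝ ξ := hξ.differentiable (by simp)
  have hq' : ContDiff ℝ (⊤ : ℕ∞) (deriv q) :=
    (contDiff_infty_iff_deriv.mp (hq.of_le (by simp))).2
  have hξ' : ContDiff ℝ (⊤ : ℕ∞) (deriv ξ) :=
    (contDiff_infty_iff_deriv.mp (hξ.of_le (by simp))).2
  have hq'd : Differentiable ℝ (deriv q) := hq'.differentiable (by simp)
  have hξ'd : Differentiable ℝ (deriv ξ) := hξ'.differentiable (by simp)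
  have hcq : Continuous q := hq.continuous
  have hcξ : Continuous ξ := hξ.continuous
  have hcq' : Continuous (deriv q) := hq'.continuous
  have hcξ' : Continuous (deriv ξ) := hξ'.continuous
  have hcq'' : Continuous (deriv (deriv q)) := hq'.continuous_deriv (by simp)
  have hAd : Differentiable ℝ A := hA.differentiable (by simp)
  have hAc : Continuous A := hA.continuous
  have hA' : Continuous (fderiv ℝ A) := hA.continuous_fderiv (by simp)
  -- periodicity of the derivative
  have hq'per : ∀ t, deriv q (t + 1) = deriv q t := by
    intro t
    have h1 : HasDerivAt (fun u => q (u + 1)) (deriv q (t + 1)) t := by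
      have h := HasDerivAt.scomp t (hqd (t + 1)).hasDerivAt
        ((hasDerivAt_id t).add_const 1)
      rw [one_smul] at h; exact h
    have h2 : (fun u => q (u + 1)) = q := funext hqper
    rw [h2] at h1
    exact h1.deriv.symm
  -- the joint potential and its derivative
  set S : Set (ℝ × E3) := (Set.univ : Set ℝ) ×ˢ ({(0 : E3)}ᶜ) with hS
  have hSopen : IsOpen S := isOpen_univ.prod isOpen_compl_singleton
  set W : ℝ × E3 → ℝ := fun p => V p.1 p.2 with hW
  set DV : ℝ × E3 → (ℝ × E3) →L[ℝ] ℝ := fun p => fderiv ℝ W p with hDV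
  have hVd : ∀ p ∈ S, HasFDerivAt W (DV p) p := by
    intro p hp
    exact ((hV.differentiableOn (by simp) p hp).differentiableAt
      (hSopen.mem_nhds hp)).hasFDerivAt
  have hDVc : ContinuousOn DV S := hV.continuousOn_fderiv_of_isOpen hSopen (by simp)
  -- compactness bounds
  obtain ⟨t₀, ht₀mem, ht₀'⟩ :=
    isCompact_Icc.exists_isMinOn (⟨0, by norm_num⟩ : (Icc (0:ℝ) 1).Nonempty)
      hcq.norm.continuousOn
  have ht₀ : ∀ t ∈ Icc (0:ℝ) 1, ‖q t₀‖ ≤ ‖q t‖ := fun t ht => isMinOn_iff.mp ht₀' t ht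
  set δ : ℝ := ‖q t₀‖ with hδdef
  have hδ : 0 < δ := norm_pos_iff.mpr (hq0 t₀)
  obtain ⟨M, hM⟩ := isCompact_Icc.exists_bound_of_continuousOn
    (hcξ.continuousOn (s := Icc (0:ℝ) 1))
  set M' : ℝ := max M 1 with hM'def
  have hM'pos : 0 < M' := lt_of_lt_of_le one_pos (le_max_right _ _)
  have hM' : ∀ t ∈ Icc (0:ℝ) 1, ‖ξ t‖ ≤ M' := fun t ht =>
    (hM t ht).trans (le_max_left _ _)
  set ε : ℝ := δ / (2 * M') with hεdef
  have hε : 0 < ε := div_pos hδ (by positivity)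
  have hεM' : ε * M' = δ / 2 := by
    field_simp [hεdef]
    rw [hεdef]; field_simp [hM'pos.ne']
  -- non-vanishing of perturbed curves
  have hne : ∀ s : ℝ, |s| ≤ ε → ∀ t ∈ Icc (0:ℝ) 1, q t + s • ξ t ≠ 0 := by
    intro s hs t ht h0
    have hqe : q t = -(s • ξ t) := eq_neg_of_add_eq_zero_left h0
    have h1 : ‖q t‖ ≤ |s| * ‖ξ t‖ := by
      rw [hqe, norm_neg, norm_smul, Real.norm_eq_abs]
    have h2 : |s| * ‖ξ t‖ ≤ ε * M' :=
      mul_le_mul hs (hM' t ht) (norm_nonneg _) (le_of_lt hε)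
    have h3 : δ ≤ ‖q t‖ := ht₀ t ht
    rw [hεM'] at h2
    linarith
  -- the reduced integrand and its s-derivative
  set F : ℝ → ℝ → ℝ := fun s t =>
    (1/2) * ‖deriv q t + s • deriv ξ t‖ ^ 2
      + ⟪A (q t + s • ξ t), deriv q t + s • deriv ξ t⟫ - V t (q t + s • ξ t)
    with hF
  set G : ℝ → ℝ → ℝ := fun s t =>
    (1/2) * (⟪deriv q t + s • deriv ξ t, deriv ξ t⟫
        + ⟪deriv ξ t, deriv q t + s • deriv ξ t⟫)
      + (⟪A (q t + s • ξ t), deriv ξ t⟫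
        + ⟪fderiv ℝ A (q t + s • ξ t) (ξ t), deriv q t + s • deriv ξ t⟫)
      - DV (t, q t + s • ξ t) (0, ξ t)
    with hG
  -- s-differentiability of the integrand
  have hFdiff : ∀ t ∈ Icc (0:ℝ) 1, ∀ s ∈ ball (0:ℝ) ε,
      HasDerivAt (fun s => F s t) (G s t) s := by
    intro t ht s hs
    have hsε : |s| ≤ ε := by
      rw [mem_ball, Real.dist_eq, sub_zero] at hs; exact le_of_lt hs
    have hv : HasDerivAt (fun s : ℝ => deriv q t + s • deriv ξ t) (deriv ξ t) s := by
      simpa using ((hasDerivAt_id s).smul_const (deriv ξ t)).const_add (deriv q t)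
    have hp : HasDerivAt (fun s : ℝ => q t + s • ξ t) (ξ t) s := by
      simpa using ((hasDerivAt_id s).smul_const (ξ t)).const_add (q t)
    have h1 : HasDerivAt (fun s : ℝ => (1/2) *
        ‖deriv q t + s • deriv ξ t‖ ^ 2)
        ((1/2) * (⟪deriv q t + s • deriv ξ t, deriv ξ t⟫
          + ⟪deriv ξ t, deriv q t + s • deriv ξ t⟫)) s := by
      have := (hv.inner ℝ hv).const_mul (1/2 : ℝ)
      simpa only [real_inner_self_eq_norm_sq] using this
    have hAcomp : HasDerivAt (fun s : ℝ => A (q t + s • ξ t))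
        (fderiv ℝ A (q t + s • ξ t) (ξ t)) s :=
      (hAd (q t + s • ξ t)).hasFDerivAt.comp_hasDerivAt s hp
    have h2 : HasDerivAt (fun s : ℝ =>
        ⟪A (q t + s • ξ t), deriv q t + s • deriv ξ t⟫)
        (⟪A (q t + s • ξ t), deriv ξ t⟫
          + ⟪fderiv ℝ A (q t + s • ξ t) (ξ t), deriv q t + s • deriv ξ t⟫) s :=
      hAcomp.inner ℝ hv
    have hmem : ((t : ℝ), q t + s • ξ t) ∈ S :=
      ⟨trivial, hne s hsε t ht⟩
    have hpair : HasDerivAt (fun s : ℝ => ((t : ℝ), q t + s • ξ t))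
        ((0 : ℝ), ξ t) s := (hasDerivAt_const s t).prodMk hp
    have h3 : HasDerivAt (fun s : ℝ => V t (q t + s • ξ t))
        (DV (t, q t + s • ξ t) (0, ξ t)) s :=
      by have h3' := (hVd _ hmem).comp_hasDerivAt s hpair; exact h3'
    exact (h1.add h2).sub h3
  -- continuity of G on a compact block
  have hGc : ContinuousOn (fun p : ℝ × ℝ => G p.1 p.2)
      (closedBall (0:ℝ) ε ×ˢ Icc (0:ℝ) 1) := by
    have hpath : Continuous (fun p : ℝ × ℝ => q p.2 + p.1 • ξ p.2) :=
      (hcq.comp continuous_snd).add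
        (continuous_fst.smul (hcξ.comp continuous_snd))
    have hvv : Continuous (fun p : ℝ × ℝ => deriv q p.2 + p.1 • deriv ξ p.2) :=
      (hcq'.comp continuous_snd).add
        (continuous_fst.smul (hcξ'.comp continuous_snd))
    have hc1 : Continuous (fun p : ℝ × ℝ =>
        (1/2) * (⟪deriv q p.2 + p.1 • deriv ξ p.2, deriv ξ p.2⟫
          + ⟪deriv ξ p.2, deriv q p.2 + p.1 • deriv ξ p.2⟫)) :=
      continuous_const.mul ((hvv.inner (hcξ'.comp continuous_snd)).add
        ((hcξ'.comp continuous_snd).inner hvv))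
    have hc2 : Continuous (fun p : ℝ × ℝ =>
        ⟪A (q p.2 + p.1 • ξ p.2), deriv ξ p.2⟫
          + ⟪fderiv ℝ A (q p.2 + p.1 • ξ p.2) (ξ p.2),
              deriv q p.2 + p.1 • deriv ξ p.2⟫) :=
      ((hAc.comp hpath).inner (hcξ'.comp continuous_snd)).add
        ((((hA'.comp hpath).clm_apply (hcξ.comp continuous_snd))).inner hvv)
    have hφ : Continuous (fun p : ℝ × ℝ => ((p.2 : ℝ), q p.2 + p.1 • ξ p.2)) :=
      continuous_snd.prodMk hpath
    have hmaps : MapsTo (fun p : ℝ × ℝ => ((p.2 : ℝ), q p.2 + p.1 • ξ p.2))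
        (closedBall (0:ℝ) ε ×ˢ Icc (0:ℝ) 1) S := by
      rintro ⟨s, t⟩ ⟨hs, ht⟩
      exact ⟨trivial, hne s (by rwa [mem_closedBall, Real.dist_eq, sub_zero] at hs) t ht⟩
    have hc3 : ContinuousOn (fun p : ℝ × ℝ =>
        DV ((p.2 : ℝ), q p.2 + p.1 • ξ p.2) (0, ξ p.2))
        (closedBall (0:ℝ) ε ×ˢ Icc (0:ℝ) 1) :=
      (hDVc.comp hφ.continuousOn hmaps).clm_apply
        (continuous_const.prodMk (hcξ.comp continuous_snd)).continuousOn
    exact ((hc1.add hc2).continuousOn.sub hc3)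
  obtain ⟨C, hC⟩ := ((isCompact_closedBall (0:ℝ) ε).prod isCompact_Icc).exists_bound_of_continuousOn hGc
  -- continuity of F s on [0,1]
  have hFcont : ∀ s : ℝ, |s| ≤ ε → ContinuousOn (F s) (Icc (0:ℝ) 1) := by
    intro s hs
    have hVc : ContinuousOn (fun t : ℝ => V t (q t + s • ξ t)) (Icc (0:ℝ) 1) := by
      have hφ : Continuous (fun t : ℝ => ((t : ℝ), q t + s • ξ t)) :=
        continuous_id.prodMk (hcq.add ((continuous_const : Continuous fun _ : ℝ => s).smul hcξ))
      have hmaps : MapsTo (fun t : ℝ => ((t : ℝ), q t + s • ξ t)) (Icc (0:ℝ) 1) S :=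
        fun t ht => ⟨trivial, hne s hs t ht⟩
      exact (hV.continuousOn.comp hφ.continuousOn hmaps :)
    refine (Continuous.continuousOn ?_).sub hVc
    exact (continuous_const.mul ((hcq'.add ((continuous_const : Continuous fun _ : ℝ => s).smul hcξ')).norm.pow 2)).add
      ((hAc.comp (hcq.add ((continuous_const : Continuous fun _ : ℝ => s).smul hcξ))).inner
        (hcq'.add ((continuous_const : Continuous fun _ : ℝ => s).smul hcξ')))
  have hGcont : ∀ s : ℝ, |s| ≤ ε → ContinuousOn (G s) (Icc (0:ℝ) 1) := by
    intro s hs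
    have : ContinuousOn (fun t : ℝ => (fun p : ℝ × ℝ => G p.1 p.2) (s, t)) (Icc (0:ℝ) 1) := by
      refine hGc.comp (continuous_const.prodMk continuous_id).continuousOn ?_
      intro t ht
      exact ⟨by rwa [mem_closedBall, Real.dist_eq, sub_zero], ht⟩
    exact this
  have hIoc : Set.uIoc (0:ℝ) 1 = Ioc (0:ℝ) 1 := uIoc_of_le (by norm_num)
  have hIsub : Set.uIoc (0:ℝ) 1 ⊆ Icc (0:ℝ) 1 := by rw [hIoc]; exact Ioc_subset_Icc_self
  -- differentiate under the integral sign
  have main := intervalIntegral.hasDerivAt_integral_of_dominated_loc_of_deriv_le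
    (F := F) (F' := G) (x₀ := (0:ℝ)) (a := 0) (b := 1) (μ := volume)
    (bound := fun _ => C) (ball_mem_nhds (0:ℝ) hε)
    ?_ ?_ ?_ ?_ ?_ ?_
  rotate_left
  · -- measurability of F s
    filter_upwards [ball_mem_nhds (0:ℝ) hε] with s hs
    have hsε : |s| ≤ ε := by
      rw [mem_ball, Real.dist_eq, sub_zero] at hs; exact le_of_lt hs
    exact ((hFcont s hsε).mono hIsub).aestronglyMeasurable
      (by rw [hIoc]; exact measurableSet_Ioc)
  · -- integrability of F 0
    exact ((hFcont 0 (by simpa using le_of_lt hε)).mono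
      (by rw [uIcc_of_le (by norm_num : (0:ℝ) ≤ 1)])).intervalIntegrable
  · -- measurability of G 0
    exact ((hGcont 0 (by simpa using le_of_lt hε)).mono hIsub).aestronglyMeasurable
      (by rw [hIoc]; exact measurableSet_Ioc)
  · -- bound
    refine ae_of_all _ fun t ht s hs => ?_
    exact hC (s, t) ⟨ball_subset_closedBall hs, hIsub ht⟩
  · exact intervalIntegrable_const
  · -- differentiability
    refine ae_of_all _ fun t ht s hs => hFdiff t (hIsub ht) s hs
  -- identification of the functional with the reduced integral
  have hfun : (fun s : ℝ => 𝒜 (fun t => q t + s • ξ t))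
      = fun s => ∫ t in (0:ℝ)..1, F s t := by
    funext s
    rw [h𝒜]
    congr 1
    funext t
    have : deriv (fun u => q u + s • ξ u) t = deriv q t + s • deriv ξ t :=
      ((hqd t).hasDerivAt.add ((hξd t).hasDerivAt.const_smul s)).deriv
    rw [hF, this]
  -- the boundary function for integration by parts
  set h : ℝ → ℝ := fun t => ⟪deriv q t, ξ t⟫ + ⟪A (q t), ξ t⟫ with hh
  set D : ℝ → ℝ := fun t =>
    (⟪deriv q t, deriv ξ t⟫ + ⟪deriv (deriv q) t, ξ t⟫)
      + (⟪A (q t), deriv ξ t⟫ + ⟪fderiv ℝ A (q t) (deriv q t), ξ t⟫) with hD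
  have hhD : ∀ t, HasDerivAt h (D t) t := fun t =>
    ((hq'd t).hasDerivAt.inner ℝ (hξd t).hasDerivAt).add
      (((hAd (q t)).hasFDerivAt.comp_hasDerivAt t (hqd t).hasDerivAt).inner ℝ
        (hξd t).hasDerivAt)
  have hDcont : Continuous D :=
    ((hcq'.inner hcξ').add (hcq''.inner hcξ)).add
      (((hAc.comp hcq).inner hcξ').add (((hA'.comp hcq).clm_apply hcq').inner hcξ))
  have hDint : ∫ t in (0:ℝ)..1, D t = 0 := by
    have hdh : deriv h = D := funext fun t => (hhD t).deriv
    rw [← hdh]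
    rw [intervalIntegral.integral_deriv_eq_sub
      (fun x _ => (hhD x).differentiableAt)
      (by rw [hdh]; exact hDcont.intervalIntegrable 0 1)]
    have e1 : q 1 = q 0 := by simpa using hqper 0
    have e2 : ξ 1 = ξ 0 := by simpa using hξper 0
    have e3 : deriv q 1 = deriv q 0 := by simpa using hq'per 0
    simp [hh, e1, e2, e3]
  -- pointwise identity
  have hpoint : ∀ t, G 0 t = D t
      - ⟪deriv (deriv q) t - B (q t) (deriv q t) + gradient (V t) (q t), ξ t⟫ := by
    intro t
    have hgradeq : ⟪gradient (V t) (q t), ξ t⟫ = DV (t, q t) (0, ξ t) := by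
      have hpr : HasFDerivAt (fun x : E3 => ((t : ℝ), x))
          (ContinuousLinearMap.inr ℝ ℝ E3) (q t) := hasFDerivAt_prodMk_right t (q t)
      have hx : HasFDerivAt (fun x : E3 => V t x)
          ((DV (t, q t)).comp (ContinuousLinearMap.inr ℝ ℝ E3)) (q t) :=
        (hVd _ ⟨trivial, by simpa using hq0 t⟩).comp (q t) hpr
      have hgr := hx.hasGradientAt.gradient
      rw [hgr, InnerProductSpace.toDual_symm_apply]
      simp
    have hBid := B_identity A B hB (q t) (ξ t) (deriv q t)
    have hcomm : ⟪deriv ξ t, deriv q t⟫ = ⟪deriv q t, deriv ξ t⟫ :=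
      real_inner_comm _ _
    simp only [hG, hD, zero_smul, add_zero, inner_add_left, inner_sub_left,
      inner_zero_left]
    rw [hgradeq]
    linarith [hBid, hcomm]
  -- value of the derivative
  have hwint : IntervalIntegrable (fun t =>
      ⟪deriv (deriv q) t - B (q t) (deriv q t) + gradient (V t) (q t), ξ t⟫)
      volume 0 1 := by
    have : (fun t => ⟪deriv (deriv q) t - B (q t) (deriv q t)
        + gradient (V t) (q t), ξ t⟫) = fun t => D t - G 0 t := by
      funext t
      rw [hpoint t]; ring
    rw [this]
    exact (hDcont.intervalIntegrable 0 1).sub main.1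
  have hval : ∫ t in (0:ℝ)..1, G 0 t
      = -∫ t in (0:ℝ)..1,
          ⟪deriv (deriv q) t - B (q t) (deriv q t) + gradient (V t) (q t), ξ t⟫ := by
    have : (fun t => G 0 t) = fun t => D t
        - ⟪deriv (deriv q) t - B (q t) (deriv q t) + gradient (V t) (q t), ξ t⟫ :=
      funext hpoint
    rw [intervalIntegral.integral_congr (fun t _ => hpoint t),
      intervalIntegral.integral_sub (hDcont.intervalIntegrable 0 1) hwint, hDint]
    ring
  have first : HasDerivAt (fun s : ℝ => 𝒜 (fun t => q t + s • ξ t))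
      (-∫ t in (0:ℝ)..1,
        ⟪deriv (deriv q) t - B (q t) (deriv q t) + gradient (V t) (q t), ξ t⟫) 0 := by
    rw [hfun, ← hval]
    exact main.2
  refine ⟨first, fun hN => ?_⟩
  have h0 : ∀ t, deriv (deriv q) t - B (q t) (deriv q t) + gradient (V t) (q t)
      = (0 : E3) := by
    intro t
    rw [hN t]
    abel
  have : (-∫ t in (0:ℝ)..1,
      ⟪deriv (deriv q) t - B (q t) (deriv q t) + gradient (V t) (q t), ξ t⟫) = 0 := by
    simp [h0]
  rw [this] at first
  exact first

end
end

section
/- Integral identity for the KS transformation: let z : ℝ → ℍ be continuous with σ := ∫₀¹ ‖z(s)‖² ds > 0 and with finite zero set in [0,1], let t_z : [0,1] → [0,1] be t_z(τ) = σ⁻¹ ∫₀^τ ‖z(s)‖² ds, and let φ : [0,1] → [0,1] be a continuous map with φ(t_z(τ)) = τ for all τ ∈ [0,1] and t_z(φ(t)) = t for all t ∈ [0,1] (the inverse reparametrization). Then the function t ↦ ‖z(φ(t))‖⁻² is integrable on [0,1] and ∫₀¹ ‖z(φ(t))‖⁻² dt = σ⁻¹. Equivalently, writing q_z(t) = Φ(z(φ(t)))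 so that |q_z(t)| = ‖z(φ(t))‖², one has ∫₀¹ |q_z(t)|⁻¹ dt = 1/‖z‖²_{L²}. -/
open MeasureTheory Set intervalIntegral


/-- Integral identity for the Kustaanheimo-Stiefel transformation: if `z` is a
continuous quaternionic curve with `σ = ∫₀¹ ‖z‖² > 0` and finitely many zeros in
`[0,1]`, and `φ` is the (continuous) inverse on `[0,1]` of the reparametrization
`t_z(τ) = σ⁻¹ ∫₀^τ ‖z‖²`, then `t ↦ ‖z(φ(t))‖⁻²` is integrable on `[0,1]` with
`∫₀¹ ‖z(φ(t))‖⁻² dt = σ⁻¹`; equivalently `∫₀¹ |q_z(t)|⁻¹ dt = 1/‖z‖²_{L²}`. -/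
theorem KS_integral_identity (z : ℝ → Quaternion ℝ) (φ : ℝ → ℝ)
    (hz : Continuous z)
    (hσ : (0:ℝ) < ∫ s in (0:ℝ)..1, ‖z s‖ ^ 2)
    (hfin : {s ∈ Set.Icc (0:ℝ) 1 | z s = 0}.Finite)
    (hφcont : ContinuousOn φ (Set.Icc (0:ℝ) 1))
    (hφmaps : Set.MapsTo φ (Set.Icc (0:ℝ) 1) (Set.Icc (0:ℝ) 1))
    (hφleft : ∀ τ ∈ Set.Icc (0:ℝ) 1,
      φ ((∫ s in (0:ℝ)..1, ‖z s‖ ^ 2)⁻¹ * ∫ s in (0:ℝ)..τ, ‖z s‖ ^ 2) = τ)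
    (hφright : ∀ t ∈ Set.Icc (0:ℝ) 1,
      (∫ s in (0:ℝ)..1, ‖z s‖ ^ 2)⁻¹ * ∫ s in (0:ℝ)..(φ t), ‖z s‖ ^ 2 = t) :
    IntervalIntegrable (fun t : ℝ => (‖z (φ t)‖ ^ 2)⁻¹)
        MeasureTheory.volume 0 1 ∧
      ∫ t in (0:ℝ)..1, (‖z (φ t)‖ ^ 2)⁻¹
        = (∫ s in (0:ℝ)..1, ‖z s‖ ^ 2)⁻¹ := by
  set σ : ℝ := ∫ s in (0:ℝ)..1, ‖z s‖ ^ 2 with hσdef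
  set f : ℝ → ℝ := fun τ => σ⁻¹ * ∫ s in (0:ℝ)..τ, ‖z s‖ ^ 2 with hfdef
  have hcont : Continuous fun s => ‖z s‖ ^ 2 := (hz.norm).pow 2
  have hii : ∀ a b : ℝ, IntervalIntegrable (fun s => ‖z s‖ ^ 2) volume a b :=
    fun a b => hcont.intervalIntegrable a b
  have hZ0 : volume {s ∈ Set.Icc (0:ℝ) 1 | z s = 0} = 0 := hfin.measure_zero _
  -- derivative of f
  have hderiv : ∀ x : ℝ, HasDerivAt f (σ⁻¹ * ‖z x‖ ^ 2) x := by
    intro x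
    have h1 : HasDerivAt (fun u => ∫ s in (0:ℝ)..u, ‖z s‖ ^ 2) (‖z x‖ ^ 2) x :=
      intervalIntegral.integral_hasDerivAt_right (hii 0 x)
        (hcont.stronglyMeasurableAtFilter _ _) hcont.continuousAt
    simpa using h1.const_mul σ⁻¹
  -- strict monotonicity (injectivity) of f on Icc
  have hsub : ∀ a b : ℝ, f b - f a = σ⁻¹ * ∫ s in a..b, ‖z s‖ ^ 2 := by
    intro a b
    rw [hfdef]; ring_nf
    rw [← mul_sub, intervalIntegral.integral_interval_sub_left (hii 0 b) (hii 0 a)]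
  have hposint : ∀ a b : ℝ, a ∈ Icc (0:ℝ) 1 → b ∈ Icc (0:ℝ) 1 → a < b →
      0 < ∫ s in a..b, ‖z s‖ ^ 2 := by
    intro a b ha hb hab
    rw [intervalIntegral.integral_pos_iff_support_of_nonneg_ae
      (Filter.Eventually.of_forall fun x => sq_nonneg _) (hii a b)]
    refine ⟨hab, ?_⟩
    have hss : Ioc a b \ {s ∈ Set.Icc (0:ℝ) 1 | z s = 0} ⊆
        Function.support (fun s => ‖z s‖ ^ 2) ∩ Ioc a b := by
      rintro x ⟨hx1, hx2⟩
      refine ⟨?_, hx1⟩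
      have hxI : x ∈ Icc (0:ℝ) 1 := ⟨ha.1.trans hx1.1.le, hx1.2.trans hb.2⟩
      have hz0 : z x ≠ 0 := fun h => hx2 ⟨hxI, h⟩
      simp [Function.mem_support, pow_eq_zero_iff, norm_eq_zero, hz0]
    refine lt_of_lt_of_le ?_ (measure_mono hss)
    rw [measure_diff_null hZ0]
    simp [Real.volume_Ioc, hab]
  have hmono : StrictMonoOn f (Icc 0 1) := by
    intro a ha b hb hab
    have := hposint a b ha hb hab
    nlinarith [hsub a b, inv_pos.mpr hσ]
  have hcontf : Continuous f := by
    have : Continuous fun u => ∫ s in (0:ℝ)..u, ‖z s‖ ^ 2 :=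
      intervalIntegral.continuous_primitive hii 0
    exact continuous_const.mul this
  have hf0 : f 0 = 0 := by simp [hfdef]
  have hf1 : f 1 = 1 := by
    simp only [hfdef]
    rw [← hσdef, inv_mul_cancel₀ hσ.ne']
  -- image of f
  have himage : f '' Icc 0 1 = Icc 0 1 := by
    apply Subset.antisymm
    · rintro _ ⟨x, hx, rfl⟩
      constructor
      · rw [← hf0]
        rcases eq_or_lt_of_le hx.1 with h | h
        · rw [h]
        · exact (hmono (left_mem_Icc.mpr zero_le_one) hx h).le
      · rw [← hf1]
        rcases eq_or_lt_of_le hx.2 with h | h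
        · rw [h]
        · exact (hmono hx (right_mem_Icc.mpr zero_le_one) h).le
    · have := intermediate_value_Icc (zero_le_one) hcontf.continuousOn
      rwa [hf0, hf1] at this
  -- change of variables
  have hinj : InjOn f (Icc 0 1) := hmono.injOn
  have hderivW : ∀ x ∈ Icc (0:ℝ) 1, HasDerivWithinAt f (σ⁻¹ * ‖z x‖ ^ 2) (Icc 0 1) x :=
    fun x _ => (hderiv x).hasDerivWithinAt
  set g : ℝ → ℝ := fun t => (‖z (φ t)‖ ^ 2)⁻¹ with hgdef
  -- the transported integrand is a.e. the constant σ⁻¹ on Icc 0 1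
  have hae : (fun x => |σ⁻¹ * ‖z x‖ ^ 2| • g (f x))
      =ᵐ[volume.restrict (Icc (0:ℝ) 1)] fun _ => σ⁻¹ := by
    have h1 : ∀ᵐ x ∂volume.restrict (Icc (0:ℝ) 1), x ∈ Icc (0:ℝ) 1 :=
      ae_restrict_mem measurableSet_Icc
    have h2 : ∀ᵐ x ∂volume.restrict (Icc (0:ℝ) 1),
        x ∉ {s ∈ Set.Icc (0:ℝ) 1 | z s = 0} := by
      refine ae_restrict_of_ae ?_
      exact ae_iff.mpr (by simpa [not_not, and_assoc] using hZ0)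
    filter_upwards [h1, h2] with x hx hx2
    have hz0 : z x ≠ 0 := fun h => hx2 ⟨hx, h⟩
    have hφfx : φ (f x) = x := hφleft x hx
    have hn : (0:ℝ) < ‖z x‖ ^ 2 := pow_pos (norm_pos_iff.mpr hz0) 2
    simp only [hgdef, hφfx, smul_eq_mul]
    rw [abs_of_nonneg (by positivity)]
    field_simp
  have hintconst : IntegrableOn (fun _ : ℝ => σ⁻¹) (Icc (0:ℝ) 1) volume :=
    (integrableOn_const_iff).mpr (Or.inr (by simp))
  have hintg : IntegrableOn g (Icc (0:ℝ) 1) volume := by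
    rw [← himage]
    rw [MeasureTheory.integrableOn_image_iff_integrableOn_abs_deriv_smul
      measurableSet_Icc hderivW hinj g]
    exact hintconst.congr_fun_ae hae.symm
  have hint : ∫ t in Icc (0:ℝ) 1, g t = σ⁻¹ := by
    rw [← himage,
      MeasureTheory.integral_image_eq_integral_abs_deriv_smul measurableSet_Icc hderivW hinj g,
      MeasureTheory.integral_congr_ae hae]
    simp [Real.volume_Icc]
  constructor
  · rw [intervalIntegrable_iff_integrableOn_Ioc_of_le zero_le_one]
    exact hintg.mono_set Ioc_subset_Icc_self
  · rw [intervalIntegral.integral_of_le zero_le_one, ← integral_Icc_eq_integral_Ioc]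
    exact hint
end

section
/- Finiteness of the zero set for second-order linear systems (abstract form of the paper's lemma on critical points of the regularized functional 𝔅): let n ∈ ℕ, let C, D : ℝ → (ℝⁿ →L[ℝ] ℝⁿ) be continuous families of linear maps, and let z : ℝ → ℝⁿ be twice continuously differentiable with z''(t) = C(t)(z(t)) + D(t)(z'(t)) for all t ∈ ℝ. If z(t₀) ≠ 0 for some t₀ ∈ ℝ, then the zero set {t ∈ [0,1] | z(t) = 0} is finite. Moreover every zero of z is transverse: if z(τ) = 0 then z'(τ) ≠ 0. -/
open Set Filter Topology

/-- Finiteness of the zero set for second-order linear systems: if a twice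
continuously differentiable curve `z` in `ℝⁿ` satisfies
`z'' = C(t) z + D(t) z'` with continuous families of linear maps `C, D`, and `z`
does not vanish identically, then its zero set in `[0,1]` is finite and every
zero of `z` is transverse. -/
theorem second_order_linear_zero_set_finite (n : ℕ)
    (C D : ℝ → (EuclideanSpace ℝ (Fin n) →L[ℝ] EuclideanSpace ℝ (Fin n)))
    (hC : Continuous C) (hD : Continuous D)
    (z z' z'' : ℝ → EuclideanSpace ℝ (Fin n))
    (hz : ∀ t : ℝ, HasDerivAt z (z' t) t)
    (hz' : ∀ t : ℝ, HasDerivAt z' (z'' t) t)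
    (hz'' : Continuous z'')
    (heq : ∀ t : ℝ, z'' t = C t (z t) + D t (z' t))
    (t₀ : ℝ) (ht₀ : z t₀ ≠ 0) :
    {t ∈ Set.Icc (0:ℝ) 1 | z t = 0}.Finite ∧
      ∀ τ : ℝ, z τ = 0 → z' τ ≠ 0 := by
  have hzc : Continuous z := by
    rw [continuous_iff_continuousAt]; exact fun t => (hz t).continuousAt
  have hz'c : Continuous z' := by
    rw [continuous_iff_continuousAt]; exact fun t => (hz' t).continuousAt
  -- transversality of zeros
  have key : ∀ τ : ℝ, z τ = 0 → z' τ ≠ 0 := by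
    intro τ hzτ hz'τ
    apply ht₀
    set a : ℝ := min τ t₀ - 1 with ha_def
    set b : ℝ := max τ t₀ + 1 with hb_def
    have haτ' : a < τ := by
      have := min_le_left τ t₀; simp only [ha_def]; linarith
    have hτb : τ < b := by
      have := le_max_left τ t₀; simp only [hb_def]; linarith
    have hat₀ : a ≤ t₀ := by
      have := min_le_right τ t₀; simp only [ha_def]; linarith
    have ht₀b : t₀ ≤ b := by
      have := le_max_right τ t₀; simp only [hb_def]; linarith
    have hab : a ≤ b := le_of_lt (lt_trans haτ' hτb)
    -- clamp to [a, b]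
    set cl : ℝ → ℝ := fun t => max a (min b t) with hcl_def
    have hcl_mem : ∀ t, cl t ∈ Set.Icc a b := by
      intro t
      refine ⟨le_max_left _ _, max_le hab (min_le_left _ _)⟩
    have hcl_eq : ∀ t ∈ Set.Ioo a b, cl t = t := by
      intro t ht
      simp only [hcl_def]
      rw [min_eq_right ht.2.le, max_eq_right ht.1.le]
    -- bounds for the coefficients on [a, b]
    obtain ⟨K₁, hK₁⟩ := isCompact_Icc.exists_bound_of_continuousOn
      (hC.continuousOn : ContinuousOn C (Set.Icc a b))
    obtain ⟨K₂, hK₂⟩ := isCompact_Icc.exists_bound_of_continuousOn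
      (hD.continuousOn : ContinuousOn D (Set.Icc a b))
    set M : ℝ := 1 + max K₁ 0 + max K₂ 0 with hM_def
    have hM1 : (1:ℝ) ≤ M := by
      have := le_max_right K₁ (0:ℝ); have := le_max_right K₂ (0:ℝ); simp only [hM_def]; linarith
    have hM0 : (0:ℝ) ≤ M := by linarith
    -- the vector field
    set E := EuclideanSpace ℝ (Fin n) × EuclideanSpace ℝ (Fin n)
    set v : ℝ → E → E := fun t p => (p.2, C (cl t) p.1 + D (cl t) p.2) with hv_def
    have hlip : ∀ t, LipschitzWith M.toNNReal (v t) := by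
      intro t
      apply LipschitzWith.of_dist_le_mul
      intro p q
      rw [Real.coe_toNNReal _ hM0]
      have hd : dist p q = max (dist p.1 q.1) (dist p.2 q.2) := Prod.dist_eq
      have h1 : dist p.1 q.1 ≤ dist p q := by rw [hd]; exact le_max_left _ _
      have h2 : dist p.2 q.2 ≤ dist p q := by rw [hd]; exact le_max_right _ _
      have hdpq : (0:ℝ) ≤ dist p q := dist_nonneg
      have hCb : ‖C (cl t)‖ ≤ max K₁ 0 :=
        le_trans (hK₁ _ (hcl_mem t)) (le_max_left _ _)
      have hDb : ‖D (cl t)‖ ≤ max K₂ 0 :=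
        le_trans (hK₂ _ (hcl_mem t)) (le_max_left _ _)
      rw [Prod.dist_eq]
      apply max_le
      · calc dist p.2 q.2 ≤ dist p q := h2
          _ = 1 * dist p q := (one_mul _).symm
          _ ≤ M * dist p q := by apply mul_le_mul_of_nonneg_right hM1 hdpq
      · rw [dist_eq_norm]
        have : C (cl t) p.1 + D (cl t) p.2 - (C (cl t) q.1 + D (cl t) q.2)
            = C (cl t) (p.1 - q.1) + D (cl t) (p.2 - q.2) := by
          simp [map_sub]; abel
        rw [this]
        calc ‖C (cl t) (p.1 - q.1) + D (cl t) (p.2 - q.2)‖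
            ≤ ‖C (cl t) (p.1 - q.1)‖ + ‖D (cl t) (p.2 - q.2)‖ := norm_add_le _ _
          _ ≤ ‖C (cl t)‖ * ‖p.1 - q.1‖ + ‖D (cl t)‖ * ‖p.2 - q.2‖ :=
              add_le_add ((C (cl t)).le_opNorm _) ((D (cl t)).le_opNorm _)
          _ ≤ max K₁ 0 * dist p q + max K₂ 0 * dist p q := by
              rw [← dist_eq_norm, ← dist_eq_norm]
              have e1 : ‖C (cl t)‖ ≤ max K₁ 0 := le_trans (hK₁ _ (hcl_mem t)) (le_max_left _ _)
              have e2 : ‖D (cl t)‖ ≤ max K₂ 0 := le_trans (hK₂ _ (hcl_mem t)) (le_max_left _ _)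
              have n1 := norm_nonneg (C (cl t))
              have n2 := norm_nonneg (D (cl t))
              nlinarith [h1, h2, dist_nonneg (x := p.1) (y := q.1), dist_nonneg (x := p.2) (y := q.2)]
          _ ≤ M * dist p q := by
              rw [hM_def]; nlinarith [le_max_right K₁ (0:ℝ), le_max_right K₂ (0:ℝ)]
    -- solutions f and 0 of the first-order system
    set f : ℝ → E := fun t => (z t, z' t) with hf_def
    have huniq : Set.EqOn f (fun _ => (0:E)) (Set.Icc a b) := by
      apply ODE_solution_unique_of_mem_Icc
        (s := fun _ => (Set.univ : Set E)) (fun t _ => (hlip t).lipschitzOnWith)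
        ⟨haτ', hτb⟩
      · exact ((hzc.prodMk hz'c).continuousOn)
      · intro t ht
        have : v t (f t) = (z' t, z'' t) := by
          simp only [hv_def, hf_def, hcl_eq t ht, heq t]
      
        rw [this]
        exact (hz t).prodMk (hz' t)
      · intro t _; trivial
      · exact continuousOn_const
      · intro t ht
        have : v t (0:E) = 0 := by
          simp [hv_def]; rfl
        rw [this]
        exact hasDerivAt_const _ _
      · intro t _; trivial
      · show f τ = 0
        simp [hf_def, hzτ, hz'τ]; rfl
    have := huniq ⟨hat₀, ht₀b⟩
    simpa [hf_def, Prod.ext_iff] using congrArg Prod.fst this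
  refine ⟨?_, key⟩
  -- finiteness: zeros are isolated by transversality
  by_contra hinf
  have hinf' : Set.Infinite {t ∈ Set.Icc (0:ℝ) 1 | z t = 0} := hinf
  obtain ⟨x, -, hacc⟩ :=
    hinf'.exists_accPt_of_subset_isCompact (isCompact_Icc (a := (0:ℝ)) (b := 1))
      (fun t ht => ht.1)
  set S := {t ∈ Set.Icc (0:ℝ) 1 | z t = 0} with hS_def
  have hacc' : ClusterPt x (𝓟 (S \ {x})) := by
    rwa [← accPt_principal_iff_clusterPt]
  have hne : (𝓝[S \ {x}] x).NeBot := hacc'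
  -- z x = 0
  have hxS : x ∈ S := by
    have hclosed : IsClosed S := by
      have : S = Set.Icc (0:ℝ) 1 ∩ z ⁻¹' {0} := by
        ext t; simp [hS_def]
      rw [this]
      exact isClosed_Icc.inter (isClosed_singleton.preimage hzc)
    have hxcl : x ∈ closure S := by
      have : x ∈ closure (S \ {x}) := mem_closure_iff_nhdsWithin_neBot.mpr hne
      exact closure_mono (Set.diff_subset) this
    rwa [hclosed.closure_eq] at hxcl
  have hzx : z x = 0 := hxS.2
  -- z' x = 0 by taking slopes along the zeros
  have hslope : Tendsto (slope z x) (𝓝[S \ {x}] x) (𝓝 (z' x)) := by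
    have h1 : Tendsto (slope z x) (𝓝[≠] x) (𝓝 (z' x)) :=
      hasDerivAt_iff_tendsto_slope.mp (hz x)
    exact h1.mono_left (nhdsWithin_mono _ (fun y hy => hy.2))
  have hzero : Tendsto (slope z x) (𝓝[S \ {x}] x) (𝓝 0) := by
    apply Tendsto.congr' _ tendsto_const_nhds
    filter_upwards [self_mem_nhdsWithin] with y hy
    simp [slope, hy.1.2, hzx]
  exact key x hzx (tendsto_nhds_unique hslope hzero)
end

section
/- For every c < 0, the intersection of the Kepler Kustaanheimo-Stiefel level set with the bilinear constraint set BL⁻¹(0) is homeomorphic to S³ × S³: the set {(z,w) ∈ ℍ × ℍ | (1/8)‖w‖² − c‖z‖² = 1 ∧ (star z * I * w).re = 0} is homeomorphic to the product of two unit three-spheres, Metric.sphere (0 : EuclideanSpace ℝ (Fin 4)) 1 × Metric.sphere (0 : EuclideanSpace ℝ (Fin 4)) 1. -/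
lemma qI_mul_qI : qI * qI = -1 := by
  ext <;> simp only [Quaternion.re_mul, Quaternion.imI_mul, Quaternion.imJ_mul, Quaternion.imK_mul] <;>
    simp [qI, Quaternion.ext_iff, Quaternion.re_one, Quaternion.imI_one, Quaternion.imJ_one,
      Quaternion.imK_one]

lemma qI_mul_qI_mul (x : Quaternion ℝ) : qI * (qI * x) = -x := by
  rw [← mul_assoc, qI_mul_qI, neg_one_mul]

lemma norm_qI_mul (w : Quaternion ℝ) : ‖qI * w‖ = ‖w‖ := by
  have : ‖qI‖ = 1 := by
    rw [norm_eq_sqrt_real_inner]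
    simp only [Quaternion.inner_def, Quaternion.re_mul, Quaternion.imI_mul, Quaternion.imJ_mul, Quaternion.imK_mul, Quaternion.re_star,
    Quaternion.imI_star, Quaternion.imJ_star, Quaternion.imK_star]
    simp [qI]
  rw [norm_mul, this, one_mul]

lemma inner_qI (z w : Quaternion ℝ) : (inner ℝ z (qI * w) : ℝ) = (star z * qI * w).re := by
  rw [Quaternion.inner_def]
  simp only [Quaternion.re_mul, Quaternion.imI_mul, Quaternion.imJ_mul, Quaternion.imK_mul, Quaternion.re_star,
    Quaternion.imI_star, Quaternion.imJ_star, Quaternion.imK_star]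
  simp [qI]
  ring

/-- The linear change of variables `(z,w) ↦ (s z + t i w, s z - t i w)` as a homeomorphism. -/
noncomputable def ksHomeo (s t : ℝ) (hs : s ≠ 0) (ht : t ≠ 0) :
    (Quaternion ℝ × Quaternion ℝ) ≃ₜ (Quaternion ℝ × Quaternion ℝ) where
  toFun := fun p => (s • p.1 + t • (qI * p.2), s • p.1 - t • (qI * p.2))
  invFun := fun q => ((1/(2*s)) • (q.1 + q.2), (-(1/(2*t))) • (qI * (q.1 - q.2)))
  left_inv := by
    intro p
    refine Prod.ext ?_ ?_ <;>
      simp only [mul_smul_comm, smul_smul, smul_add, smul_sub, qI_mul_qI_mul, smul_neg,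
        mul_sub, mul_add] <;>
      match_scalars <;> (field_simp; try ring)
  right_inv := by
    intro q
    refine Prod.ext ?_ ?_ <;>
      simp only [mul_smul_comm, smul_smul, smul_add, smul_sub, qI_mul_qI_mul, smul_neg, neg_neg,
        mul_sub, mul_add] <;>
      match_scalars <;> (field_simp; try ring)
  continuous_toFun := by fun_prop
  continuous_invFun := by fun_prop

lemma ksHomeo_apply (s t : ℝ) (hs : s ≠ 0) (ht : t ≠ 0) (p : Quaternion ℝ × Quaternion ℝ) :
    ksHomeo s t hs ht p = (s • p.1 + t • (qI * p.2), s • p.1 - t • (qI * p.2)) := rfl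

/-- For every `c < 0`, the intersection of the Kepler Kustaanheimo-Stiefel level
set `{K_c = 0}` (with `K_c(z,w) = ⅛‖w‖² − c‖z‖² − 1`) with the bilinear
constraint set `BL⁻¹(0)`, where `BL(z,w) = Re(z̄ i w)`, is homeomorphic to
`S³ × S³`. -/
theorem KS_Kepler_constrained_level_set_homeomorphic_S3xS3 (c : ℝ) (hc : c < 0) :
    Nonempty
      (({p : Quaternion ℝ × Quaternion ℝ |
          (1/8 : ℝ) * ‖p.2‖ ^ 2 - c * ‖p.1‖ ^ 2 = 1 ∧
            (star p.1 * qI * p.2).re = 0} :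
            Set (Quaternion ℝ × Quaternion ℝ)) ≃ₜ
        ((Metric.sphere (0 : EuclideanSpace ℝ (Fin 4)) 1) ×
          (Metric.sphere (0 : EuclideanSpace ℝ (Fin 4)) 1))) := by
  have hs : (0:ℝ) < Real.sqrt (-c) := Real.sqrt_pos.mpr (by linarith)
  have ht : (0:ℝ) < Real.sqrt (1/8) := Real.sqrt_pos.mpr (by norm_num)
  set s : ℝ := Real.sqrt (-c)
  set t : ℝ := Real.sqrt (1/8)
  have hs2 : s ^ 2 = -c := Real.sq_sqrt (by linarith)
  have ht2 : t ^ 2 = 1/8 := Real.sq_sqrt (by norm_num)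
  set F := ksHomeo s t hs.ne' ht.ne' with hF_def
  have hmem : ∀ p : Quaternion ℝ × Quaternion ℝ,
      p ∈ ({p : Quaternion ℝ × Quaternion ℝ |
          (1/8 : ℝ) * ‖p.2‖ ^ 2 - c * ‖p.1‖ ^ 2 = 1 ∧
            (star p.1 * qI * p.2).re = 0} : Set _) ↔
      F p ∈ (Metric.sphere (0 : Quaternion ℝ) 1) ×ˢ (Metric.sphere (0 : Quaternion ℝ) 1) := by
    intro ⟨z, w⟩
    have hB : (inner ℝ (s • z) (t • (qI * w)) : ℝ) = s * t * (star z * qI * w).re := by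
      rw [real_inner_smul_left, real_inner_smul_right, inner_qI]; ring
    have hnu : ‖s • z + t • (qI * w)‖ ^ 2
        = (-c) * ‖z‖ ^ 2 + (1/8) * ‖w‖ ^ 2 + 2 * (s * t * (star z * qI * w).re) := by
      rw [norm_add_sq_real, hB, norm_smul, norm_smul, norm_qI_mul]
      simp only [Real.norm_eq_abs, mul_pow, sq_abs, hs2, ht2]; ring
    have hnv : ‖s • z - t • (qI * w)‖ ^ 2
        = (-c) * ‖z‖ ^ 2 + (1/8) * ‖w‖ ^ 2 - 2 * (s * t * (star z * qI * w).re) := by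
      rw [norm_sub_sq_real, hB, norm_smul, norm_smul, norm_qI_mul]
      simp only [Real.norm_eq_abs, mul_pow, sq_abs, hs2, ht2]; ring
    have hsq : ∀ x : Quaternion ℝ, ‖x‖ = 1 ↔ ‖x‖ ^ 2 = 1 := by
      intro x
      constructor
      · intro h; rw [h]; norm_num
      · intro h; nlinarith [norm_nonneg x]
    rw [hF_def, ksHomeo_apply]
    simp only [Set.mem_setOf_eq, Set.mem_prod, mem_sphere_zero_iff_norm, hsq, hnu, hnv]
    have hst : 0 < s * t := mul_pos hs ht
    constructor
    · rintro ⟨h1, h2⟩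
      constructor <;> (rw [h2]; linarith)
    · rintro ⟨h1, h2⟩
      have hb : (star z * qI * w).re = 0 := by nlinarith
      rw [hb] at h1
      exact ⟨by linarith, hb⟩
  have eS : (Metric.sphere (0 : Quaternion ℝ) 1) ≃ₜ
      (Metric.sphere (0 : EuclideanSpace ℝ (Fin 4)) 1) :=
    Quaternion.linearIsometryEquivTuple.toHomeomorph.subtype fun x => by
      simp only [mem_sphere_zero_iff_norm, LinearIsometryEquiv.coe_toHomeomorph,
        LinearIsometryEquiv.norm_map]
  exact ⟨(F.subtype hmem).trans ((Homeomorph.Set.prod _ _).trans (Homeomorph.prodCongr eS eS))⟩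
end
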